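/- arXiv:1802.09639 — 3 statements merged into one kernel-verified Lean document; each statement's English description precedes it below -/
import Mathlib

section
/- Fix an integer M ≥ 1 and an integer window size W ≥ 1, and fix ε > 0. Then the probability that the mass of the unobserved set exceeds the rate of discovery by more than ε satisfies P( π(U_M) − R_{M,W} > ε ) ≤ exp(−W ε² / 2). -/
open MeasureTheory ProbabilityTheory Real

/-!
Once the first `M` draws are fixed, the unobserved set `U` is fixed, and the next `W` draws are
independent of them; the discovery indicators `1{ω_{M+i} ∈ U}` are then i.i.d. Bernoulli with mean
`μ U`. Hoeffding's inequality bounds the conditional probability of a deviation `> ε` by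
`exp (-2 W ε²)`, uniformly in the first `M` draws, so the same bound holds after integrating them
out, and it is stronger than `exp (-W ε² / 2)`.
-/

lemma IndepFun.measure_prodMk_preimage_le {Ω α β : Type*} [MeasurableSpace Ω] {P : Measure Ω}
    [IsProbabilityMeasure P] [MeasurableSpace α] [MeasurableSpace β] {f : Ω → α} {g : Ω → β}
    (hfg : IndepFun f g P) (hf : AEMeasurable f P) (hg : AEMeasurable g P)
    {D : Set (α × β)} (hD : MeasurableSet D) {c : ENNReal}
    (hc : ∀ a, P (g ⁻¹' (Prod.mk a ⁻¹' D)) ≤ c) :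
    P ((fun x ↦ (f x, g x)) ⁻¹' D) ≤ c := by
  have : IsProbabilityMeasure (P.map f) := Measure.isProbabilityMeasure_map hf
  calc P ((fun x ↦ (f x, g x)) ⁻¹' D)
      = ∫⁻ a, P.map g (Prod.mk a ⁻¹' D) ∂P.map f := by
        rw [← Measure.map_apply_of_aemeasurable (hf.prodMk hg) hD,
          (indepFun_iff_map_prod_eq_prod_map_map hf hg).mp hfg, Measure.prod_apply hD]
    _ ≤ ∫⁻ _, c ∂P.map f := by
        refine lintegral_mono fun a ↦ ?_
        rw [Measure.map_apply_of_aemeasurable hg (measurable_prodMk_left hD)]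
        exact hc a
    _ = c := by simp

lemma measureReal_sum_sub_indicator_ge_le {Ω ι B : Type*} [MeasurableSpace Ω] {P : Measure Ω}
    [IsProbabilityMeasure P] [MeasurableSpace B] {μ : Measure B} {ω : ι → Ω → B}
    (hmeas : ∀ i, Measurable (ω i)) (hindep : iIndepFun ω P)
    (hdist : ∀ i, P.map (ω i) = μ) {S : Set B} (hS : MeasurableSet S) (T : Finset ι)
    {t : ℝ} (ht : 0 ≤ t) :
    P.real {x | t ≤ ∑ i ∈ T, (μ.real S - S.indicator 1 (ω i x))} ≤ exp (-2 * t ^ 2 / T.card) := by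
  have hmean : ∀ i, P[fun x ↦ -S.indicator (1 : B → ℝ) (ω i x)] = -μ.real S := fun i ↦ by
    rw [integral_neg, ← integral_map (hmeas i).aemeasurable
      (measurable_one.indicator hS).aestronglyMeasurable, hdist i, integral_indicator_one hS]
  have hsubG : ∀ i, HasSubgaussianMGF (fun x ↦ μ.real S - S.indicator 1 (ω i x))
      (1 / 4) P := fun i ↦ by
    have hIcc : ∀ x, -S.indicator (1 : B → ℝ) (ω i x) ∈ Set.Icc (-1) 0 := fun x ↦ by
      by_cases hx : ω i x ∈ S <;> simp [hx]
    convert hasSubgaussianMGF_of_mem_Icc (μ := P) (X := fun x ↦ -S.indicator (1 : B → ℝ) (ω i x))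
      ((measurable_one.indicator hS).comp (hmeas i)).neg.aemeasurable (ae_of_all _ hIcc) using 1
    · ext x
      rw [hmean]
      ring
    · norm_num
  have hindep' : iIndepFun (fun i x ↦ μ.real S - S.indicator (1 : B → ℝ) (ω i x)) P :=
    hindep.comp (fun _ b ↦ μ.real S - S.indicator 1 b)
      fun _ ↦ measurable_const.sub (measurable_one.indicator hS)
  refine (HasSubgaussianMGF.measure_sum_ge_le_of_iIndepFun hindep' (fun i _ ↦ hsubG i)
    ht).trans_eq ?_
  congr 1
  rw [Finset.sum_const, nsmul_eq_mul]
  push_cast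
  ring

lemma measure_lt_sub_mean_indicator_le {Ω ι B : Type*} [MeasurableSpace Ω] {P : Measure Ω}
    [IsProbabilityMeasure P] [MeasurableSpace B] {μ : Measure B} {ω : ι → Ω → B}
    (hmeas : ∀ i, Measurable (ω i)) (hindep : iIndepFun ω P)
    (hdist : ∀ i, P.map (ω i) = μ) {S : Set B} (hS : MeasurableSet S) {T : Finset ι}
    (hT : T.Nonempty) {ε : ℝ} (hε : 0 ≤ ε) :
    P {x | ε < μ.real S - 1 / (T.card : ℝ) * ∑ i ∈ T, S.indicator 1 (ω i x)}
      ≤ ENNReal.ofReal (exp (-2 * T.card * ε ^ 2)) := by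
  have hcard : (0 : ℝ) < T.card := by exact_mod_cast hT.card_pos
  have hsub : {x | ε < μ.real S - 1 / (T.card : ℝ) * ∑ i ∈ T, S.indicator 1 (ω i x)}
      ⊆ {x | T.card * ε ≤ ∑ i ∈ T, (μ.real S - S.indicator 1 (ω i x))} := fun x hx ↦ by
    simp only [Set.mem_ofPred_eq, Finset.sum_sub_distrib, Finset.sum_const, nsmul_eq_mul] at hx ⊢
    rw [lt_sub_iff_add_lt, ← mul_lt_mul_iff_right₀ hcard] at hx
    field_simp at hx
    linarith
  calc P {x | ε < μ.real S - 1 / (T.card : ℝ) * ∑ i ∈ T, S.indicator 1 (ω i x)}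
      ≤ ENNReal.ofReal (P.real {x | T.card * ε ≤ ∑ i ∈ T, (μ.real S - S.indicator 1 (ω i x))}) :=
        (measure_mono hsub).trans_eq (ofReal_measureReal (measure_ne_top _ _)).symm
    _ ≤ ENNReal.ofReal (exp (-2 * T.card * ε ^ 2)) := by
        refine ENNReal.ofReal_le_ofReal ((measureReal_sum_sub_indicator_ge_le hmeas hindep hdist
          hS T (by positivity)).trans_eq ?_)
        field_simp

lemma measure_lt_sub_mean_indicator_compl_range_le {Ω ι B : Type*} [MeasurableSpace Ω]
    {P : Measure Ω} [IsProbabilityMeasure P] [Finite B] [MeasurableSpace B]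
    [MeasurableSingletonClass B] {μ : Measure B} {ω : ι → Ω → B}
    (hmeas : ∀ i, Measurable (ω i)) (hindep : iIndepFun ω P)
    (hdist : ∀ i, P.map (ω i) = μ) {S T : Finset ι} (hST : Disjoint S T) (hT : T.Nonempty)
    {ε : ℝ} (hε : 0 ≤ ε) :
    P {x | ε < μ.real (Set.range fun i : S ↦ ω i x)ᶜ
        - 1 / (T.card : ℝ) * ∑ i ∈ T, (Set.range fun i : S ↦ ω i x)ᶜ.indicator 1 (ω i x)}
      ≤ ENNReal.ofReal (exp (-2 * T.card * ε ^ 2)) := by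
  let D : Set ((S → B) × (T → B)) :=
    {p | ε < μ.real (Set.range p.1)ᶜ - 1 / (T.card : ℝ) * ∑ i, (Set.range p.1)ᶜ.indicator 1 (p.2 i)}
  have hevent : {x | ε < μ.real (Set.range fun i : S ↦ ω i x)ᶜ
        - 1 / (T.card : ℝ) * ∑ i ∈ T, (Set.range fun i : S ↦ ω i x)ᶜ.indicator 1 (ω i x)}
      = (fun x ↦ ((fun i : S ↦ ω i x), (fun i : T ↦ ω i x))) ⁻¹' D := by
    ext x
    simp only [Set.mem_preimage, Set.mem_ofPred_eq, D, ← Finset.sum_coe_sort T]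
  rw [hevent]
  refine IndepFun.measure_prodMk_preimage_le (hindep.indepFun_finset S T hST hmeas) (by fun_prop)
    (by fun_prop) (Set.toFinite D).measurableSet fun u ↦ ?_
  have := measure_lt_sub_mean_indicator_le hmeas hindep hdist
    (Set.toFinite (Set.range u)ᶜ).measurableSet hT hε
  simp only [← Finset.sum_coe_sort T] at this
  exact this

theorem discovery_rate_one_window_general
    {Ω : Type*} [MeasurableSpace Ω] (P : Measure Ω) [IsProbabilityMeasure P]
    {B : Type*} [Fintype B] [DecidableEq B] [MeasurableSpace B] [MeasurableSingletonClass B]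
    (μ : Measure B)
    (ω : ℕ → Ω → B)
    (hmeas : ∀ i, Measurable (ω i))
    (hindep : iIndepFun ω P)
    (hdist : ∀ i, Measure.map (ω i) P = μ)
    (M W : ℕ) (hW : 1 ≤ W) (ε : ℝ) (hε : 0 < ε) :
    P {x | (μ {b | ∀ i ∈ Finset.Icc 1 M, ω i x ≠ b}).toReal
          - (1 / (W : ℝ)) * ∑ i ∈ Finset.Icc 1 W,
              (if ∀ j ∈ Finset.Icc (1 : ℕ) M, ω j x ≠ ω (M + i) x then (1 : ℝ) else 0) > ε}
      ≤ ENNReal.ofReal (Real.exp (-(W : ℝ) * ε ^ 2 / 2)) := by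
  set T := (Finset.Icc 1 W).map (addLeftEmbedding M)
  have hT : T.card = W := by simp [T]
  have hdisj : Disjoint (Finset.Icc 1 M) T := by
    simp only [T, Finset.map_add_left_Icc, Finset.disjoint_left, Finset.mem_Icc]
    omega
  have hevent : ∀ x, ((μ {b | ∀ i ∈ Finset.Icc 1 M, ω i x ≠ b}).toReal
          - (1 / (W : ℝ)) * ∑ i ∈ Finset.Icc 1 W,
              (if ∀ j ∈ Finset.Icc (1 : ℕ) M, ω j x ≠ ω (M + i) x then (1 : ℝ) else 0))
      = μ.real (Set.range fun i : Finset.Icc 1 M ↦ ω i x)ᶜ - 1 / (T.card : ℝ) *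
          ∑ i ∈ T, (Set.range fun i : Finset.Icc 1 M ↦ ω i x)ᶜ.indicator 1 (ω i x) := fun x ↦ by
    have hU : {b | ∀ i ∈ Finset.Icc 1 M, ω i x ≠ b}
        = (Set.range fun i : Finset.Icc 1 M ↦ ω i x)ᶜ := by
      ext b
      simp
    simp only [hU, hT, T, Finset.sum_map, Set.indicator_apply, measureReal_def]
    simp
  simp_rw [gt_iff_lt, hevent]
  refine (measure_lt_sub_mean_indicator_compl_range_le hmeas hindep hdist hdisj
    (Finset.card_pos.mp (hT ▸ hW)) hε.le).trans (ENNReal.ofReal_le_ofReal ?_)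
  rw [exp_le_exp, hT]
  nlinarith [sq_nonneg ε, (Nat.cast_pos.mpr hW : (0 : ℝ) < W)]

/-- For fixed `M ≥ 1`, window size `W ≥ 1` and `ε > 0`, the probability that
the mass of the unobserved set exceeds the rate of discovery by more than `ε` is at most
`exp (-W ε² / 2)`. -/
theorem discovery_rate_one_window
    {Ω : Type*} [MeasurableSpace Ω] (P : Measure Ω) [IsProbabilityMeasure P]
    {B : Type*} [Fintype B] [Nonempty B] [DecidableEq B] [MeasurableSpace B] [MeasurableSingletonClass B]
    (μ : Measure B) [IsProbabilityMeasure μ]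
    (ω : ℕ → Ω → B)
    (hmeas : ∀ i, Measurable (ω i))
    (hindep : iIndepFun ω P)
    (hdist : ∀ i, Measure.map (ω i) P = μ)
    (M W : ℕ) (hM : 1 ≤ M) (hW : 1 ≤ W) (ε : ℝ) (hε : 0 < ε) :
    P {x | (μ {b | ∀ i ∈ Finset.Icc 1 M, ω i x ≠ b}).toReal
          - (1 / (W : ℝ)) * ∑ i ∈ Finset.Icc 1 W,
              (if ∀ j ∈ Finset.Icc (1 : ℕ) M, ω j x ≠ ω (M + i) x then (1 : ℝ) else 0) > ε}
      ≤ ENNReal.ofReal (Real.exp (-(W : ℝ) * ε ^ 2 / 2)) :=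
  discovery_rate_one_window_general P μ ω hmeas hindep hdist M W hW ε hε
end

section
/- Let c > 0 and ε > 0 be reals with γ := c ε² / 2 > 1, let M̲ ≥ 2 be an integer, and let W : ℕ → ℕ assign to each M ≥ 1 an integer window size with W(M) ≥ c · max{log M̲, log M} (natural logarithm). Then the probability that the mass of the unobserved set is within ε of the rate of discovery simultaneously for all M satisfies P( π(U_M) − R_{M,W(M)} ≤ ε for all integers M ≥ 1 ) ≥ 1 − (γ/(γ−1)) · (M̲ − 1)^{−(γ−1)}. -/
open MeasureTheory ProbabilityTheory Real

/-!
The unobserved set `U_M` is a function of `ω₁, …, ω_M`, which are independent of the window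
`ω_{M+1}, …, ω_{M+W}`. Once `U_M = U` is fixed, the rate of discovery is the empirical frequency
of `U` in `W` fresh samples, so Hoeffding's inequality bounds `P(π(U_M) - R_{M,W} > ε)` by
`exp (-2 W ε²) ≤ max(M̲, M)^(-γ)`. A union bound over `M`, with the tail `∑_{M ≥ M̲} M^(-γ)`
compared to `∫_{M̲-1}^∞ x^(-γ) dx`, gives the claim.
-/

lemma hasSubgaussianMGF_measureReal_sub_indicator {B : Type*} [MeasurableSpace B]
    {μ : Measure B} [IsProbabilityMeasure μ] {A : Set B} (hA : MeasurableSet A) :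
    HasSubgaussianMGF (fun b ↦ μ.real A - A.indicator 1 b) (1 / 4) μ := by
  have h := (hasSubgaussianMGF_of_mem_Icc (μ := μ) (X := A.indicator (1 : B → ℝ)) (a := 0)
    (b := 1) (measurable_one.indicator hA).aemeasurable
    (ae_of_all _ fun b ↦ ⟨Set.indicator_nonneg (fun _ _ ↦ zero_le_one) b,
      Set.indicator_le_self' (fun _ _ ↦ zero_le_one) b⟩)).neg
  rw [integral_indicator_one hA] at h
  convert h using 1
  · ext b; simp
  · ext; norm_num

lemma measure_measureReal_sub_frequency_gt_le {Ω B ι : Type*} [MeasurableSpace Ω]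
    {P : Measure Ω} [IsProbabilityMeasure P] [MeasurableSpace B] {μ : Measure B}
    [IsProbabilityMeasure μ] {X : ι → Ω → B} (hmeas : ∀ i, Measurable (X i))
    (hindep : iIndepFun X P) (hdist : ∀ i, P.map (X i) = μ) {A : Set B} (hA : MeasurableSet A)
    (T : Finset ι) {ε : ℝ} (hε : 0 ≤ ε) :
    P {x | ε < μ.real A - 1 / (T.card : ℝ) * ∑ i ∈ T, A.indicator 1 (X i x)}
      ≤ ENNReal.ofReal (exp (-2 * T.card * ε ^ 2)) := by
  set φ : B → ℝ := fun b ↦ μ.real A - A.indicator 1 b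
  have hφ : Measurable φ := measurable_const.sub (measurable_one.indicator hA)
  have hsubG : ∀ i ∈ T, HasSubgaussianMGF (φ ∘ X i) (1 / 4) P := fun i _ ↦
    .of_map (hmeas i).aemeasurable
      (by rw [hdist i]; exact hasSubgaussianMGF_measureReal_sub_indicator hA)
  have hoeffding := HasSubgaussianMGF.measure_sum_ge_le_of_iIndepFun
    (hindep.comp (fun _ ↦ φ) fun _ ↦ hφ) hsubG (ε := T.card * ε) (by positivity)
  have hexp : -(T.card * ε) ^ 2 / (2 * ∑ i ∈ T, (1 / 4 : NNReal)) = -2 * T.card * ε ^ 2 := by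
    rcases Nat.eq_zero_or_pos T.card with h | h
    · simp [h] -- both sides are `0`, the left one through `x / 0 = 0`
    · rw [Finset.sum_const, nsmul_eq_mul]; push_cast; field_simp; ring
  rw [hexp] at hoeffding
  refine (measure_mono fun x hx ↦ ?_).trans
    ((ENNReal.le_ofReal_iff_toReal_le (measure_ne_top _ _) (by positivity)).2 hoeffding)
  simp only [Set.mem_ofPred_eq, Function.comp_apply, φ, Finset.sum_sub_distrib,
    Finset.sum_const, nsmul_eq_mul] at hx ⊢
  rcases T.eq_empty_or_nonempty with rfl | hT
  · simp
  · have : (0 : ℝ) < T.card := by exact_mod_cast hT.card_pos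
    rw [one_div, lt_sub_iff_add_lt, ← lt_sub_iff_add_lt', inv_mul_lt_iff₀ this] at hx
    linarith

lemma ProbabilityTheory.IndepFun.measure_mem_of_forall_le {Ω α β : Type*} [MeasurableSpace Ω]
    {P : Measure Ω} [IsProbabilityMeasure P] [Countable α] [MeasurableSpace α]
    [MeasurableSingletonClass α] [MeasurableSpace β] {X : Ω → α} {Y : Ω → β}
    (hX : Measurable X) (hXY : IndepFun X Y P) {G : α → Set β} (hG : ∀ a, MeasurableSet (G a))
    {r : ENNReal} (hr : ∀ a, P (Y ⁻¹' G a) ≤ r) :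
    P {x | Y x ∈ G (X x)} ≤ r := by
  have hsplit : {x | Y x ∈ G (X x)} = ⋃ a, X ⁻¹' {a} ∩ Y ⁻¹' G a := by
    ext x; simp
  have hfibers : ∑' a, P (X ⁻¹' {a}) = 1 := by
    rw [← measure_iUnion (fun a b hab ↦ Disjoint.preimage _ (Set.disjoint_singleton.2 hab))
      fun a ↦ hX (measurableSet_singleton a)]
    rw [← Set.preimage_iUnion, Set.iUnion_of_singleton, Set.preimage_univ, measure_univ]
  calc P {x | Y x ∈ G (X x)} ≤ ∑' a, P (X ⁻¹' {a} ∩ Y ⁻¹' G a) := hsplit ▸ measure_iUnion_le _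
    _ = ∑' a, P (X ⁻¹' {a}) * P (Y ⁻¹' G a) := by
      congr! 2 with a
      exact hXY.measure_inter_preimage_eq_mul _ _ (measurableSet_singleton a) (hG a)
    _ ≤ ∑' a, P (X ⁻¹' {a}) * r := by gcongr with a; exact hr a
    _ = r := by rw [ENNReal.tsum_mul_right, hfibers, one_mul]

section Discovery

variable {Ω B : Type*}

def unobservedSet (ω : ℕ → Ω → B) (M : ℕ) (x : Ω) : Set B :=
  {b | ∀ i ∈ Finset.Icc 1 M, ω i x ≠ b}

noncomputable def discoveryRate [DecidableEq B] (ω : ℕ → Ω → B) (M W : ℕ) (x : Ω) : ℝ :=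
  (1 / (W : ℝ)) * ∑ i ∈ Finset.Icc 1 W,
    (if ∀ j ∈ Finset.Icc (1 : ℕ) M, ω j x ≠ ω (M + i) x then (1 : ℝ) else 0)

lemma unobservedSet_eq_compl_range (ω : ℕ → Ω → B) (M : ℕ) (x : Ω) :
    unobservedSet ω M x = (Set.range fun i : Finset.Icc 1 M ↦ ω i x)ᶜ := by
  ext b; simp [unobservedSet]

lemma discoveryRate_eq_sum_indicator [DecidableEq B] (ω : ℕ → Ω → B) (M W : ℕ) (x : Ω) :
    discoveryRate ω M W x
      = 1 / (W : ℝ) * ∑ i : Finset.Icc 1 W, (unobservedSet ω M x).indicator 1 (ω (M + i) x) := by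
  rw [discoveryRate, Finset.sum_coe_sort (Finset.Icc 1 W)
    (fun i ↦ (unobservedSet ω M x).indicator 1 (ω (M + i) x))]
  simp [unobservedSet, Set.indicator_apply]

variable [MeasurableSpace Ω] {P : Measure Ω} [IsProbabilityMeasure P]
  [MeasurableSpace B] [Countable B] [MeasurableSingletonClass B] {μ : Measure B}
  [IsProbabilityMeasure μ] {ω : ℕ → Ω → B}

lemma measure_unobservedMass_sub_discoveryRate_gt_le [DecidableEq B]
    (hmeas : ∀ i, Measurable (ω i)) (hindep : iIndepFun ω P) (hdist : ∀ i, P.map (ω i) = μ)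
    {ε : ℝ} (hε : 0 ≤ ε) (M n : ℕ) :
    P {x | ε < μ.real (unobservedSet ω M x) - discoveryRate ω M n x}
      ≤ ENNReal.ofReal (exp (-2 * n * ε ^ 2)) := by
  set X : Ω → Finset.Icc 1 M → B := fun x i ↦ ω i x
  set Y : Ω → Finset.Icc 1 n → B := fun x i ↦ ω (M + i) x
  have hXY : IndepFun X Y P := by
    have hdisj : Disjoint (Finset.Icc 1 M) (Finset.Icc (M + 1) (M + n)) := by
      rw [Finset.disjoint_left]; intro a ha hb; simp at ha hb; omega
    exact (hindep.indepFun_finset _ _ hdisj hmeas).comp measurable_id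
      (ψ := fun v (i : Finset.Icc 1 n) ↦ v ⟨M + i, Finset.mem_Icc.2 (by
        have := Finset.mem_Icc.1 i.2; omega)⟩)
      (measurable_pi_lambda _ fun i ↦ measurable_pi_apply _)
  set G : (Finset.Icc 1 M → B) → Set (Finset.Icc 1 n → B) := fun a ↦
    {y | ε < μ.real (Set.range a)ᶜ - 1 / (n : ℝ) * ∑ i, (Set.range a)ᶜ.indicator 1 (y i)}
  have hevent : {x | ε < μ.real (unobservedSet ω M x) - discoveryRate ω M n x}
      = {x | Y x ∈ G (X x)} := by
    ext x
    simp only [discoveryRate_eq_sum_indicator, unobservedSet_eq_compl_range]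
    rfl
  rw [hevent]
  refine hXY.measure_mem_of_forall_le (by fun_prop) (fun _ ↦ .of_discrete) fun a ↦ ?_
  have hwindow := measure_measureReal_sub_frequency_gt_le
    (X := fun i : Finset.Icc 1 n ↦ ω (M + i)) (fun _ ↦ hmeas _)
    (hindep.precomp fun i j h ↦ Subtype.ext (Nat.add_left_cancel h)) (fun _ ↦ hdist _)
    (A := (Set.range a)ᶜ) .of_discrete Finset.univ hε
  rwa [Finset.card_univ, Fintype.card_coe, Nat.card_Icc, Nat.add_sub_cancel] at hwindow

end Discovery

lemma sum_Ico_rpow_neg_le {γ : ℝ} (hγ : 1 < γ) {K : ℕ} (hK : 1 ≤ K) (N : ℕ) :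
    ∑ k ∈ Finset.Ico K N, ((k + 1 : ℕ) : ℝ) ^ (-γ) ≤ (K : ℝ) ^ (-(γ - 1)) / (γ - 1) := by
  have hK0 : (0 : ℝ) < K := by exact_mod_cast hK
  rcases le_or_gt K N with hKN | hNK
  · calc ∑ k ∈ Finset.Ico K N, ((k + 1 : ℕ) : ℝ) ^ (-γ)
        ≤ ∫ x in (K : ℝ)..N, x ^ (-γ) :=
          AntitoneOn.sum_le_integral_Ico hKN fun x hx y _ hxy ↦
            rpow_le_rpow_of_nonpos (hK0.trans_le hx.1) hxy (by linarith)
      _ = ((K : ℝ) ^ (-(γ - 1)) - (N : ℝ) ^ (-(γ - 1))) / (γ - 1) := by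
          rw [integral_rpow (Or.inr ⟨by linarith, fun h ↦ ?_⟩)]
          · rw [show -γ + 1 = -(γ - 1) by ring, div_neg, ← neg_div, neg_sub]
          · rw [Set.uIcc_of_le (by exact_mod_cast hKN)] at h
            linarith [h.1]
      _ ≤ (K : ℝ) ^ (-(γ - 1)) / (γ - 1) := by
          gcongr
          linarith [rpow_nonneg (Nat.cast_nonneg N) (-(γ - 1))]
  · rw [Finset.Ico_eq_empty_of_le hNK.le, Finset.sum_empty]
    exact div_nonneg (rpow_nonneg hK0.le _) (by linarith)

lemma sum_range_max_rpow_neg_le {γ : ℝ} (hγ : 1 < γ) {L : ℕ} (hL : 2 ≤ L) (N : ℕ) :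
    ∑ k ∈ Finset.range N, (max (L : ℝ) (k + 1)) ^ (-γ)
      ≤ γ / (γ - 1) * ((L : ℝ) - 1) ^ (-(γ - 1)) := by
  obtain ⟨K, rfl⟩ : ∃ K, L = K + 1 := ⟨L - 1, by omega⟩
  have hK : 1 ≤ K := by omega
  have hK0 : (0 : ℝ) < K := by exact_mod_cast hK
  push_cast
  rw [add_sub_cancel_right]
  have hhead : ∑ k ∈ Finset.range K, (max ((K : ℝ) + 1) (k + 1)) ^ (-γ)
      ≤ (K : ℝ) ^ (-(γ - 1)) := by
    calc ∑ k ∈ Finset.range K, (max ((K : ℝ) + 1) (k + 1)) ^ (-γ)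
        ≤ ∑ k ∈ Finset.range K, (K : ℝ) ^ (-γ) := by
          refine Finset.sum_le_sum fun k _ ↦ rpow_le_rpow_of_nonpos hK0 ?_ (by linarith)
          exact (le_add_of_nonneg_right zero_le_one).trans (le_max_left _ _)
      _ = (K : ℝ) ^ (-(γ - 1)) := by
          rw [Finset.sum_const, Finset.card_range, nsmul_eq_mul, neg_sub,
            sub_eq_add_neg, rpow_add hK0, rpow_one]
  have htail : ∑ k ∈ Finset.Ico K (max N K), (max ((K : ℝ) + 1) (k + 1)) ^ (-γ)
      ≤ (K : ℝ) ^ (-(γ - 1)) / (γ - 1) := by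
    refine le_of_eq_of_le (Finset.sum_congr rfl fun k hk ↦ ?_) (sum_Ico_rpow_neg_le hγ hK _)
    have : (K : ℝ) ≤ k := by exact_mod_cast (Finset.mem_Ico.1 hk).1
    rw [max_eq_right (by linarith)]
    push_cast; rfl
  calc ∑ k ∈ Finset.range N, (max ((K : ℝ) + 1) (k + 1)) ^ (-γ)
      ≤ ∑ k ∈ Finset.range (max N K), (max ((K : ℝ) + 1) (k + 1)) ^ (-γ) :=
        Finset.sum_le_sum_of_subset_of_nonneg (Finset.range_subset_range.2 (le_max_left _ _))
          fun k _ _ ↦ rpow_nonneg (by positivity) _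
    _ = ∑ k ∈ Finset.range K, (max ((K : ℝ) + 1) (k + 1)) ^ (-γ)
        + ∑ k ∈ Finset.Ico K (max N K), (max ((K : ℝ) + 1) (k + 1)) ^ (-γ) :=
        (Finset.sum_range_add_sum_Ico _ (le_max_right _ _)).symm
    _ ≤ (K : ℝ) ^ (-(γ - 1)) + (K : ℝ) ^ (-(γ - 1)) / (γ - 1) := add_le_add hhead htail
    _ = γ / (γ - 1) * (K : ℝ) ^ (-(γ - 1)) := by
        field_simp [show γ - 1 ≠ 0 by linarith]; ring

lemma tsum_ofReal_max_rpow_neg_le {γ : ℝ} (hγ : 1 < γ) {L : ℕ} (hL : 2 ≤ L) :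
    ∑' k : ℕ, ENNReal.ofReal ((max (L : ℝ) (k + 1)) ^ (-γ))
      ≤ ENNReal.ofReal (γ / (γ - 1) * ((L : ℝ) - 1) ^ (-(γ - 1))) := by
  refine ENNReal.tsum_le_of_sum_range_le fun N ↦ ?_
  rw [← ENNReal.ofReal_sum_of_nonneg fun k _ ↦ rpow_nonneg (by positivity) _]
  exact ENNReal.ofReal_le_ofReal (sum_range_max_rpow_neg_le hγ hL N)

lemma exp_neg_two_mul_le_max_rpow_neg {a b c : ℝ} (ha : 0 < a) (hb : 0 < b) {W : ℕ}
    (hW : c * max (log a) (log b) ≤ W) (ε : ℝ) :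
    exp (-2 * W * ε ^ 2) ≤ max a b ^ (-(c * ε ^ 2 / 2)) := by
  have hlog : log (max a b) = max (log a) (log b) := by
    rcases le_total a b with h | h
    · rw [max_eq_right h, max_eq_right (log_le_log ha h)]
    · rw [max_eq_left h, max_eq_left (log_le_log hb h)]
  rw [rpow_def_of_pos (lt_max_of_lt_left ha), exp_le_exp, hlog]
  have hW0 : (0 : ℝ) ≤ W := W.cast_nonneg
  nlinarith [sq_nonneg ε]

theorem discovery_rate_uniform_bound_general
    {Ω : Type*} [MeasurableSpace Ω] (P : Measure Ω) [IsProbabilityMeasure P]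
    {B : Type*} [Fintype B] [DecidableEq B]
    [MeasurableSpace B] [MeasurableSingletonClass B]
    (μ : Measure B) [IsProbabilityMeasure μ]
    (ω : ℕ → Ω → B)
    (hmeas : ∀ i, Measurable (ω i))
    (hindep : iIndepFun ω P)
    (hdist : ∀ i, Measure.map (ω i) P = μ)
    (c ε γ : ℝ) (hε : 0 < ε)
    (hγdef : γ = c * ε ^ 2 / 2) (hγ : 1 < γ)
    (Mlow : ℕ) (hMlow : 2 ≤ Mlow)
    (W : ℕ → ℕ)
    (hW : ∀ M : ℕ, 1 ≤ M → c * max (Real.log Mlow) (Real.log M) ≤ (W M : ℝ)) :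
    1 - ENNReal.ofReal ((γ / (γ - 1)) * ((Mlow : ℝ) - 1) ^ (-(γ - 1)))
      ≤ P {x | ∀ M : ℕ, 1 ≤ M →
            (μ {b | ∀ i ∈ Finset.Icc 1 M, ω i x ≠ b}).toReal
              - (1 / (W M : ℝ)) * ∑ i ∈ Finset.Icc 1 (W M),
                  (if ∀ j ∈ Finset.Icc (1 : ℕ) M, ω j x ≠ ω (M + i) x then (1 : ℝ) else 0)
              ≤ ε} := by
  set good := {x | ∀ M : ℕ, 1 ≤ M →
    μ.real (unobservedSet ω M x) - discoveryRate ω M (W M) x ≤ ε}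
  set bad : ℕ → Set Ω := fun M ↦
    {x | ε < μ.real (unobservedSet ω M x) - discoveryRate ω M (W M) x}
  have hcover : Set.univ ⊆ good ∪ ⋃ k, bad (k + 1) := by
    intro x _
    refine or_iff_not_imp_left.2 fun hx ↦ ?_
    simp only [good, Set.mem_ofPred_eq, not_forall, not_le, exists_prop] at hx
    obtain ⟨M, hM, hMx⟩ := hx
    obtain ⟨k, rfl⟩ : ∃ k, M = k + 1 := ⟨M - 1, by omega⟩
    exact Set.mem_iUnion.2 ⟨k, hMx⟩
  have hbad : ∀ k : ℕ, P (bad (k + 1)) ≤ ENNReal.ofReal ((max (Mlow : ℝ) (k + 1)) ^ (-γ)) := by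
    intro k
    have hexp := exp_neg_two_mul_le_max_rpow_neg (by positivity) (by positivity)
      (hW (k + 1) (by omega)) ε
    rw [← hγdef, Nat.cast_succ] at hexp
    exact (measure_unobservedMass_sub_discoveryRate_gt_le hmeas hindep hdist hε.le _ _).trans
      (ENNReal.ofReal_le_ofReal hexp)
  rw [tsub_le_iff_right]
  calc (1 : ENNReal) = P Set.univ := measure_univ.symm
    _ ≤ P good + P (⋃ k, bad (k + 1)) := (measure_mono hcover).trans (measure_union_le _ _)
    _ ≤ P good + _ := by
      gcongr
      exact (measure_iUnion_le _).trans
        ((ENNReal.tsum_le_tsum hbad).trans (tsum_ofReal_max_rpow_neg_le hγ hMlow))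

/-- With window sizes `W M ≥ c · max (log M̲) (log M)` and `γ = c ε²/2 > 1`,
the undiscovered mass is within `ε` of the rate of discovery simultaneously for all `M ≥ 1`
with probability at least `1 - (γ/(γ-1)) (M̲-1)^(-(γ-1))`. -/
theorem discovery_rate_uniform_bound
    {Ω : Type*} [MeasurableSpace Ω] (P : Measure Ω) [IsProbabilityMeasure P]
    {B : Type*} [Fintype B] [Nonempty B] [DecidableEq B]
    [MeasurableSpace B] [MeasurableSingletonClass B]
    (μ : Measure B) [IsProbabilityMeasure μ]
    (ω : ℕ → Ω → B)
    (hmeas : ∀ i, Measurable (ω i))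
    (hindep : iIndepFun ω P)
    (hdist : ∀ i, Measure.map (ω i) P = μ)
    (c ε γ : ℝ) (hc : 0 < c) (hε : 0 < ε)
    (hγdef : γ = c * ε ^ 2 / 2) (hγ : 1 < γ)
    (Mlow : ℕ) (hMlow : 2 ≤ Mlow)
    (W : ℕ → ℕ)
    (hW : ∀ M : ℕ, 1 ≤ M → c * max (Real.log Mlow) (Real.log M) ≤ (W M : ℝ)) :
    1 - ENNReal.ofReal ((γ / (γ - 1)) * ((Mlow : ℝ) - 1) ^ (-(γ - 1)))
      ≤ P {x | ∀ M : ℕ, 1 ≤ M →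
            (μ {b | ∀ i ∈ Finset.Icc 1 M, ω i x ≠ b}).toReal
              - (1 / (W M : ℝ)) * ∑ i ∈ Finset.Icc 1 (W M),
                  (if ∀ j ∈ Finset.Icc (1 : ℕ) M, ω j x ≠ ω (M + i) x then (1 : ℝ) else 0)
              ≤ ε} :=
  discovery_rate_uniform_bound_general P μ ω hmeas hindep hdist c ε γ hε hγdef hγ Mlow hMlow W hW
end

section
/- Suppose the system is low-complexity with parameters (α_0, K_0), i.e., there exists a set I* ⊆ B with |I*| ≤ K_0 and μ(I*) > 1 − α_0. Then for every real α > α_0 and every integer M ≥ 1, the probability that the observed mass is insufficient satisfies P( π(O_M) < 1 − α ) ≤ 2^{K_0} · exp(−(α − α_0) M). -/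
open MeasureTheory ProbabilityTheory Real

/-!
Fix the heavy set `I`. If the observed set `O` has mass below `1 - α`, then the unobserved part
`I \ O` is a subset of `I` of mass above `α - α₀` that no sample hits. For a fixed `S` of mass
above `α - α₀`, independence and `1 - p ≤ exp (-p)` bound the probability that `M` samples all
miss `S` by `exp (-(α - α₀) M)`; a union bound over the `2 ^ |I|` subsets of `I` finishes.
-/

section

variable {Ω B : Type*} [MeasurableSpace B] {μ : Measure B}

lemma measure_compl_le_exp_neg [IsProbabilityMeasure μ] {A : Set B} (hA : MeasurableSet A) :
    μ Aᶜ ≤ ENNReal.ofReal (exp (-μ.real A)) := by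
  rw [← ofReal_measureReal, probReal_compl_eq_one_sub hA]
  exact ENNReal.ofReal_le_ofReal (by linarith [add_one_le_exp (-μ.real A)])

lemma setOf_measureReal_observed_lt_subset [IsFiniteMeasure μ] {ι : Type*} (ω : ι → Ω → B)
    (s : Finset ι) {I : Finset B} {α α₀ : ℝ} (hI : 1 - α₀ < μ.real I) :
    {x | μ.real {b | ∃ i ∈ s, ω i x = b} < 1 - α} ⊆
      ⋃ S ∈ I.powerset.filter (fun S : Finset B => α - α₀ < μ.real (S : Set B)),
        ⋂ i ∈ s, ω i ⁻¹' (S : Set B)ᶜ := by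
  classical
  intro x hx
  set O : Set B := {b | ∃ i ∈ s, ω i x = b}
  have hmass : α - α₀ < μ.real ((I : Set B) \ O) := by
    have := le_measureReal_sdiff (μ := μ) (s₁ := (I : Set B)) (s₂ := O)
    simp only [Set.mem_ofPred_eq] at hx
    linarith
  refine Set.mem_iUnion₂.mpr ⟨I.filter (· ∉ O), ?_, ?_⟩
  · refine Finset.mem_filter.mpr ⟨Finset.mem_powerset.mpr (Finset.filter_subset _ _), ?_⟩
    rwa [Finset.coe_filter]
  · simp only [Set.mem_iInter, Set.mem_preimage, Set.mem_compl_iff, Finset.mem_coe,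
      Finset.mem_filter, not_and, not_not]
    exact fun i hi _ => ⟨i, hi, rfl⟩

variable [MeasurableSpace Ω] {P : Measure Ω}

lemma ProbabilityTheory.iIndepFun.measure_biInter_preimage_eq_pow {ι : Type*}
    {ω : ι → Ω → B} (hmeas : ∀ i, Measurable (ω i)) (hindep : iIndepFun ω P)
    (hdist : ∀ i, P.map (ω i) = μ)
    (s : Finset ι) {A : Set B} (hA : MeasurableSet A) :
    P (⋂ i ∈ s, ω i ⁻¹' A) = μ A ^ s.card := by
  rw [hindep.meas_biInter fun i _ => ⟨A, hA, rfl⟩, ← Finset.prod_const]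
  exact Finset.prod_congr rfl fun i _ => by rw [← hdist i, Measure.map_apply (hmeas i) hA]

lemma ProbabilityTheory.iIndepFun.measure_biInter_preimage_compl_le_exp [IsProbabilityMeasure μ]
    {ι : Type*} {ω : ι → Ω → B} (hmeas : ∀ i, Measurable (ω i)) (hindep : iIndepFun ω P)
    (hdist : ∀ i, P.map (ω i) = μ) (s : Finset ι) {A : Set B} (hA : MeasurableSet A)
    {δ : ℝ} (hδ : δ ≤ μ.real A) :
    P (⋂ i ∈ s, ω i ⁻¹' Aᶜ) ≤ ENNReal.ofReal (exp (-δ * s.card)) := by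
  rw [hindep.measure_biInter_preimage_eq_pow hmeas hdist s hA.compl, mul_comm, exp_nat_mul,
    ENNReal.ofReal_pow (exp_nonneg _)]
  gcongr
  exact (measure_compl_le_exp_neg hA).trans (ENNReal.ofReal_le_ofReal (by gcongr))

end

theorem lowComplexity_observed_mass_bound_general
    {Ω : Type*} [MeasurableSpace Ω] (P : Measure Ω) [IsProbabilityMeasure P]
    {B : Type*}
    [MeasurableSpace B] [MeasurableSingletonClass B]
    (μ : Measure B) [IsProbabilityMeasure μ]
    (ω : ℕ → Ω → B)
    (hmeas : ∀ i, Measurable (ω i))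
    (hindep : iIndepFun ω P)
    (hdist : ∀ i, Measure.map (ω i) P = μ)
    (α₀ : ℝ) (K₀ : ℕ)
    (hlow : ∃ I : Finset B, I.card ≤ K₀ ∧ 1 - α₀ < (μ (I : Set B)).toReal)
    (α : ℝ) (M : ℕ) :
    P {x | (μ {b | ∃ i ∈ Finset.Icc 1 M, ω i x = b}).toReal < 1 - α}
      ≤ ENNReal.ofReal ((2 : ℝ) ^ K₀ * Real.exp (-(α - α₀) * M)) := by
  obtain ⟨I, hIcard, hImass⟩ := hlow
  set T := I.powerset.filter (fun S : Finset B => α - α₀ < μ.real (S : Set B))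
  have hTcard : T.card ≤ 2 ^ K₀ := calc
    T.card ≤ 2 ^ I.card := (Finset.card_filter_le _ _).trans (Finset.card_powerset I).le
    _ ≤ 2 ^ K₀ := Nat.pow_le_pow_right two_pos hIcard
  calc P {x | (μ {b | ∃ i ∈ Finset.Icc 1 M, ω i x = b}).toReal < 1 - α}
      ≤ P (⋃ S ∈ T, ⋂ i ∈ Finset.Icc 1 M, ω i ⁻¹' (S : Set B)ᶜ) :=
        measure_mono (setOf_measureReal_observed_lt_subset ω _ hImass)
    _ ≤ ∑ S ∈ T, P (⋂ i ∈ Finset.Icc 1 M, ω i ⁻¹' (S : Set B)ᶜ) :=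
        measure_biUnion_finset_le _ _
    _ ≤ T.card • ENNReal.ofReal (exp (-(α - α₀) * M)) := by
        refine Finset.sum_le_card_nsmul _ _ _ fun S hS => ?_
        simpa using hindep.measure_biInter_preimage_compl_le_exp hmeas hdist (Finset.Icc 1 M)
          S.measurableSet (Finset.mem_filter.mp hS).2.le
    _ ≤ ENNReal.ofReal ((2 : ℝ) ^ K₀ * exp (-(α - α₀) * M)) := by
        rw [nsmul_eq_mul, ENNReal.ofReal_mul (by positivity), ENNReal.ofReal_pow zero_le_two,
          ENNReal.ofReal_ofNat]
        gcongr
        exact_mod_cast hTcard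

/-- For a low-complexity system with parameters `(α₀, K₀)` (there is a set
`I* ⊆ B` with `|I*| ≤ K₀` and `μ I* > 1 - α₀`), for every `α > α₀` and `M ≥ 1`,
`P(π(O_M) < 1 - α) ≤ 2^K₀ exp (-(α - α₀) M)`. -/
theorem lowComplexity_observed_mass_bound
    {Ω : Type*} [MeasurableSpace Ω] (P : Measure Ω) [IsProbabilityMeasure P]
    {B : Type*} [Fintype B] [Nonempty B] [DecidableEq B]
    [MeasurableSpace B] [MeasurableSingletonClass B]
    (μ : Measure B) [IsProbabilityMeasure μ]
    (ω : ℕ → Ω → B)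
    (hmeas : ∀ i, Measurable (ω i))
    (hindep : iIndepFun ω P)
    (hdist : ∀ i, Measure.map (ω i) P = μ)
    (α₀ : ℝ) (hα₀0 : 0 ≤ α₀) (hα₀1 : α₀ < 1) (K₀ : ℕ) (hK₀ : 1 ≤ K₀)
    (hlow : ∃ I : Finset B, I.card ≤ K₀ ∧ 1 - α₀ < (μ (I : Set B)).toReal)
    (α : ℝ) (hα : α₀ < α) (M : ℕ) (hM : 1 ≤ M) :
    P {x | (μ {b | ∃ i ∈ Finset.Icc 1 M, ω i x = b}).toReal < 1 - α}
      ≤ ENNReal.ofReal ((2 : ℝ) ^ K₀ * Real.exp (-(α - α₀) * M)) :=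
  lowComplexity_observed_mass_bound_general P μ ω hmeas hindep hdist α₀ K₀ hlow α M
end
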